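/- arXiv:2306.04623 — 3 statements merged into one kernel-verified Lean document; each statement's English description precedes it below -/
import Mathlib

section
/- Let r be a square root on a pseudo MV-algebra M = Γ(G,u). Then r(0) ⊙ x = x ⊙ r(0) for every x ∈ M. -/
section Core

variable {G : Type} [Lattice G] [AddGroup G]

/-- `u` is a strong unit of the ℓ-group `G`. -/
def IsStrongUnit (u : G) : Prop :=
  0 ≤ u ∧ ∀ g : G, ∃ n : ℕ, 1 ≤ n ∧ g ≤ n • u

/-- Truncated addition `x ⊕ y = (x + y) ⊓ u` of the pseudo MV-algebra `Γ(G,u)`. -/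
def oplus (u x y : G) : G := (x + y) ⊓ u

/-- Left negation `x⁻ = u - x`. -/
def negl (u x : G) : G := u - x

/-- Right negation `x~ = -x + u`. -/
def negr (u x : G) : G := -x + u

/-- `x ⊙ y = (x - u + y) ⊔ 0`. -/
def odot (u x y : G) : G := (x - u + y) ⊔ 0

/-- `r` is a square root on the pseudo MV-algebra `M = Γ(G,u)`:
it maps `M` to `M` and satisfies (Sq1), (Sq2), (Sq3). -/
def IsSquareRoot (u : G) (r : G → G) : Prop :=
  (∀ x, 0 ≤ x → x ≤ u → 0 ≤ r x ∧ r x ≤ u) ∧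
  (∀ x, 0 ≤ x → x ≤ u → odot u (r x) (r x) = x) ∧
  (∀ x y, 0 ≤ x → x ≤ u → 0 ≤ y → y ≤ u → odot u y y ≤ x → y ≤ r x) ∧
  (∀ x, 0 ≤ x → x ≤ u → r (negl u x) = oplus u (negl u (r x)) (r 0)) ∧
  (∀ x, 0 ≤ x → x ≤ u → r (negr u x) = oplus u (r 0) (negr u (r x)))

/-- `r` is strict: `r 0 = r 0⁻`. -/
def IsStrict (u : G) (r : G → G) : Prop := r 0 = negl u (r 0)

end Core

/-- An additive structure is two-divisible if every element is `h + h` for some `h`. -/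
def TwoDivisible (A : Type) [Add A] : Prop := ∀ g : A, ∃ h : A, h + h = g

/-!
Write `v = r 0`. By (Sq2) at `0`, `v` is the largest `y ∈ [0,u]` with `y - u + y ≤ 0`;
conjugation by an element commuting with `u` preserves this property, so `v` commutes with `u`.
For `c ∈ [0,v]`, (Sq2) and (Sq3) at the two negations of `c + c` bound `r (c + c)` by `v + c` and
by `c + v`, and (Sq1) there turns both bounds into equalities, so `c` commutes with `v`. Then (Sq1)
at `c + c` shows that `c = 0` as soon as `v + v + c ≤ u`; hence `e = -(v + v) + u` is disjoint
from every `c ∈ [0,v]`, disjoint elements of an ℓ-group commute, and `[0,v]` commutes with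
`u = v + v + e`. Finally `v ⊙ x ∈ [0,v]` commutes with `u - v`, which is exactly what
`v ⊙ x = x ⊙ v` requires.
-/

open Set

section LatticeOrderedGroup

variable {G : Type*} [Lattice G] [AddGroup G] [AddLeftMono G] [AddRightMono G]

theorem add_neg_inf_add (a b : G) : a + -(a ⊓ b) + b = b ⊔ a := by
  rw [neg_inf, add_sup, sup_add, add_neg_cancel, zero_add, neg_add_cancel_right]

theorem AddCommute.of_inf_eq_zero {a b : G} (h : a ⊓ b = 0) : AddCommute a b := by
  have hab := add_neg_inf_add a b
  have hba := add_neg_inf_add b a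
  rw [h, neg_zero, add_zero] at hab
  rw [inf_comm, h, neg_zero, add_zero] at hba
  show a + b = b + a
  rw [hab, hba, sup_comm]

theorem eq_of_le_of_add_self_eq {a b : G} (hab : a ≤ b) (h : a + a = b + b) : a = b :=
  add_right_cancel (b := b) <|
    le_antisymm (add_le_add_left hab b) (h ▸ add_le_add_right hab a)

end LatticeOrderedGroup

section PseudoMV

variable {G : Type} [Lattice G] [AddGroup G] {u : G}

theorem odot_le_left [AddLeftMono G] {a x : G} (ha : 0 ≤ a) (hxu : x ≤ u) : odot u a x ≤ a :=
  sup_le ((add_le_add_right hxu _).trans_eq (sub_add_cancel a u)) ha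

namespace IsSquareRoot

variable {r : G → G} (hr : IsSquareRoot u r)
include hr

theorem apply_mem_Icc {x : G} (hx : x ∈ Icc 0 u) : r x ∈ Icc 0 u :=
  hr.1 x hx.1 hx.2

theorem odot_apply_self {x : G} (hx : x ∈ Icc 0 u) : odot u (r x) (r x) = x :=
  hr.2.1 x hx.1 hx.2

theorem le_apply {x y : G} (hx : x ∈ Icc 0 u) (hy : y ∈ Icc 0 u) (h : y - u + y ≤ x) :
    y ≤ r x :=
  hr.2.2.1 x y hx.1 hx.2 hy.1 hy.2 (sup_le h hx.1)

theorem apply_zero_mem_Icc (hu : 0 ≤ u) : r 0 ∈ Icc 0 u :=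
  hr.apply_mem_Icc ⟨le_rfl, hu⟩

theorem apply_zero_sub_add_apply_zero_le (hu : 0 ≤ u) : r 0 - u + r 0 ≤ 0 :=
  le_sup_left.trans (hr.odot_apply_self ⟨le_rfl, hu⟩).le

theorem apply_zero_le_apply (hu : 0 ≤ u) {x : G} (hx : x ∈ Icc 0 u) : r 0 ≤ r x :=
  hr.le_apply hx (hr.apply_zero_mem_Icc hu)
    ((hr.apply_zero_sub_add_apply_zero_le hu).trans hx.1)

theorem apply_zero_add_apply_zero_le [AddLeftMono G] [AddRightMono G] (hu : 0 ≤ u) :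
    r 0 + r 0 ≤ u := by
  have h := hr.apply_zero_sub_add_apply_zero_le hu
  rw [← le_neg_iff_add_nonpos_right, sub_le_iff_le_add] at h
  exact le_neg_add_iff_add_le.1 h

theorem apply_negl [AddLeftMono G] (hu : 0 ≤ u) {x : G} (hx : x ∈ Icc 0 u) :
    r (negl u x) = u - r x + r 0 := by
  rw [hr.2.2.2.1 x hx.1 hx.2, oplus, negl, inf_eq_left]
  exact (add_le_add_right (hr.apply_zero_le_apply hu hx) _).trans_eq (sub_add_cancel u _)

theorem apply_negr [AddRightMono G] (hu : 0 ≤ u) {x : G} (hx : x ∈ Icc 0 u) :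
    r (negr u x) = r 0 - r x + u := by
  rw [hr.2.2.2.2 x hx.1 hx.2, oplus, negr, ← add_assoc, ← sub_eq_add_neg, inf_eq_left]
  exact add_le_of_nonpos_left (sub_nonpos.2 (hr.apply_zero_le_apply hu hx))

end IsSquareRoot

variable [AddLeftMono G] [AddRightMono G]

theorem negl_mem_Icc {x : G} (hx : x ∈ Icc 0 u) : negl u x ∈ Icc 0 u :=
  ⟨sub_nonneg.2 hx.2, sub_le_self u hx.1⟩

theorem negr_mem_Icc {x : G} (hx : x ∈ Icc 0 u) : negr u x ∈ Icc 0 u :=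
  ⟨le_neg_add_iff_le.2 hx.2, neg_add_le_iff_le_add.2 (le_add_of_nonneg_left hx.1)⟩

theorem odot_comm_of_addCommute {a x : G} (hau : AddCommute a u)
    (hcu : AddCommute (odot u a x) u) (hca : AddCommute (odot u a x) a) :
    odot u a x = odot u x a := by
  have h : AddCommute (u - a) (odot u a x) := by
    rw [sub_eq_add_neg]
    exact (hcu.add_right hca.neg_right).symm
  have hneg : -(u - a) = a - u := neg_sub u a
  have hsup : u - a + odot u a x = x ⊔ (u - a) := by
    rw [odot, add_sup, ← hneg, add_neg_cancel_left, add_zero]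
  calc odot u a x = u - a + odot u a x - (u - a) := by rw [h.eq, add_sub_cancel_right]
    _ = (x - (u - a)) ⊔ 0 := by rw [hsup, sup_sub, sub_self]
    _ = odot u x a := by
      rw [odot, sub_eq_add_neg x (u - a), hneg, sub_eq_add_neg, sub_eq_add_neg,
        hau.neg_right.eq, add_assoc]

namespace IsSquareRoot

variable {r : G → G} (hr : IsSquareRoot u r) (hu : 0 ≤ u)
include hr hu

theorem conj_apply_zero_le {g : G} (hg : AddCommute g u) : g + r 0 - g ≤ r 0 := by
  obtain ⟨hv0, hvu⟩ := hr.apply_zero_mem_Icc hu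
  refine hr.le_apply ⟨le_rfl, hu⟩ ⟨?_, ?_⟩ ?_
  · simpa using add_le_add_left (add_le_add_right hv0 g) (-g)
  · calc g + r 0 - g ≤ g + u - g := sub_le_sub_right (add_le_add_right hvu g) g
      _ = u := by rw [hg.eq, add_sub_cancel_right]
  · calc g + r 0 - g - u + (g + r 0 - g) = g + (r 0 - u + r 0) - g := by
          simp only [sub_eq_add_neg, add_assoc, hg.neg_right.symm.left_comm,
            neg_add_cancel_left]
      _ ≤ g + 0 - g :=
          sub_le_sub_right (add_le_add_right (hr.apply_zero_sub_add_apply_zero_le hu) g) g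
      _ = 0 := by rw [add_zero, sub_self]

theorem addCommute_apply_zero_of_addCommute {g : G} (hg : AddCommute g u) :
    AddCommute g (r 0) := by
  have h₁ := hr.conj_apply_zero_le hu hg
  have h₂ := hr.conj_apply_zero_le hu hg.neg_left
  rw [sub_neg_eq_add, add_assoc, neg_add_le_iff_le_add] at h₂
  exact le_antisymm (sub_le_iff_le_add.1 h₁) h₂

theorem add_self_mem_Icc {c : G} (hc : c ∈ Icc 0 (r 0)) : c + c ∈ Icc 0 u :=
  ⟨add_nonneg hc.1 hc.1, (add_le_add hc.2 hc.2).trans (hr.apply_zero_add_apply_zero_le hu)⟩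

theorem apply_add_self_le_apply_zero_add {c : G} (hc : 0 ≤ c) (hcc : c + c ≤ u) :
    r (c + c) ≤ r 0 + c := by
  have hcc' : c + c ∈ Icc 0 u := ⟨add_nonneg hc hc, hcc⟩
  have h : u - c ≤ r (negl u (c + c)) := by
    refine hr.le_apply (negl_mem_Icc hcc')
      (negl_mem_Icc ⟨hc, le_of_add_le_of_nonneg_left hcc hc⟩) ?_
    simp only [negl, sub_eq_add_neg, neg_add_rev, add_assoc, neg_add_cancel_left, le_refl]
  rw [hr.apply_negl hu hcc', sub_eq_add_neg, sub_eq_add_neg, add_assoc, add_le_add_iff_left,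
    le_neg_add_iff_add_le] at h
  exact add_neg_le_iff_le_add.1 h

theorem apply_add_self_le_add_apply_zero {c : G} (hc : 0 ≤ c) (hcc : c + c ≤ u) :
    r (c + c) ≤ c + r 0 := by
  have hcc' : c + c ∈ Icc 0 u := ⟨add_nonneg hc hc, hcc⟩
  have h : -c + u ≤ r (negr u (c + c)) := by
    refine hr.le_apply (negr_mem_Icc hcc')
      (negr_mem_Icc ⟨hc, le_of_add_le_of_nonneg_left hcc hc⟩) ?_
    simp only [negr, sub_eq_add_neg, neg_add_rev, add_assoc, add_neg_cancel_left, le_refl]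
  rw [hr.apply_negr hu hcc', add_le_add_iff_right] at h
  exact neg_add_le_iff_le_add.1 (le_sub_iff_add_le.1 h)

theorem apply_add_self_eq_apply_zero_add {c : G} (hc : c ∈ Icc 0 (r 0)) :
    r (c + c) = r 0 + c := by
  have hcc := hr.add_self_mem_Icc hu hc
  obtain ⟨h, hs⟩ : ∃ h, r (c + c) = r 0 + h :=
    ⟨-r 0 + r (c + c), (add_neg_cancel_left _ _).symm⟩
  have hhc : h ≤ c :=
    le_of_add_le_add_left (hs ▸ hr.apply_add_self_le_apply_zero_add hu hc.1 hcc.2)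
  have hsq := hr.odot_apply_self (negl_mem_Icc hcc)
  have hsquare : u - (r 0 + h) + r 0 - u + (u - (r 0 + h) + r 0) = u - (h + h) := by
    simp only [sub_eq_add_neg, neg_add_rev, add_assoc, neg_add_cancel_left, neg_add_cancel,
      add_zero]
  rw [hr.apply_negl hu hcc, hs, odot, hsquare, negl,
    sup_eq_left.2 (sub_nonneg.2 ((add_le_add hhc hhc).trans hcc.2))] at hsq
  rw [hs, eq_of_le_of_add_self_eq hhc (sub_right_injective hsq)]

theorem apply_add_self_eq_add_apply_zero {c : G} (hc : c ∈ Icc 0 (r 0)) :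
    r (c + c) = c + r 0 := by
  have hcc := hr.add_self_mem_Icc hu hc
  obtain ⟨h, hs⟩ : ∃ h, r (c + c) = h + r 0 :=
    ⟨r (c + c) - r 0, (sub_add_cancel _ _).symm⟩
  have hhc : h ≤ c :=
    le_of_add_le_add_right (hs ▸ hr.apply_add_self_le_add_apply_zero hu hc.1 hcc.2)
  have hsq := hr.odot_apply_self (negr_mem_Icc hcc)
  have hsquare : r 0 - (h + r 0) + u - u + (r 0 - (h + r 0) + u) = -(h + h) + u := by
    simp only [sub_eq_add_neg, neg_add_rev, add_assoc, add_neg_cancel_left]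
  rw [hr.apply_negr hu hcc, hs, odot, hsquare, negr,
    sup_eq_left.2 (le_neg_add_iff_le.2 ((add_le_add hhc hhc).trans hcc.2))] at hsq
  rw [hs, eq_of_le_of_add_self_eq hhc (neg_injective (add_right_cancel hsq))]

theorem addCommute_apply_zero_of_mem_Icc {c : G} (hc : c ∈ Icc 0 (r 0)) :
    AddCommute c (r 0) :=
  (hr.apply_add_self_eq_add_apply_zero hu hc).symm.trans
    (hr.apply_add_self_eq_apply_zero_add hu hc)

theorem eq_zero_of_mem_Icc_of_add_le {c : G} (hc : c ∈ Icc 0 (r 0))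
    (hcu : r 0 + r 0 + c ≤ u) : c = 0 := by
  have hsq := hr.odot_apply_self (hr.add_self_mem_Icc hu hc)
  rw [hr.apply_add_self_eq_apply_zero_add hu hc] at hsq
  have hle : r 0 + c - u + r 0 ≤ 0 := by
    rw [← le_neg_iff_add_nonpos_right, sub_le_iff_le_add, le_neg_add_iff_add_le, ← add_assoc]
    exact hcu
  have hcc : c + c ≤ c :=
    hsq.symm.trans_le <|
      sup_le (by simpa only [add_assoc, zero_add] using add_le_add_left hle c) hc.1
  exact le_antisymm (add_le_iff_nonpos_left.1 hcc) hc.1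

theorem addCommute_of_mem_Icc {c : G} (hc : c ∈ Icc 0 (r 0)) : AddCommute c u := by
  set e := -(r 0 + r 0) + u
  have he : 0 ≤ e := le_neg_add_iff_le.2 (hr.apply_zero_add_apply_zero_le hu)
  have hu_eq : r 0 + r 0 + e = u := add_neg_cancel_left _ _
  have hev : e ⊓ r 0 = 0 :=
    hr.eq_zero_of_mem_Icc_of_add_le hu ⟨le_inf he (hr.apply_zero_mem_Icc hu).1, inf_le_right⟩
      (hu_eq ▸ add_le_add_right inf_le_left _)
  have hec : e ⊓ c = 0 := le_antisymm (hev ▸ inf_le_inf_left e hc.2) (le_inf he hc.1)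
  have hcv := hr.addCommute_apply_zero_of_mem_Icc hu hc
  rw [← hu_eq]
  exact (hcv.add_right hcv).add_right (AddCommute.of_inf_eq_zero hec).symm

end IsSquareRoot

end PseudoMV

theorem stmt_15_general {G : Type} [Lattice G] [AddGroup G]
    [CovariantClass G G (· + ·) (· ≤ ·)]
    [CovariantClass G G (Function.swap (· + ·)) (· ≤ ·)]
    (u : G) (r : G → G) (hr : IsSquareRoot u r)
    (x : G) (hx0 : 0 ≤ x) (hxu : x ≤ u) :
    odot u (r 0) x = odot u x (r 0) := by
  have hu : 0 ≤ u := hx0.trans hxu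
  have hc : odot u (r 0) x ∈ Icc 0 (r 0) :=
    ⟨le_sup_right, odot_le_left (hr.apply_zero_mem_Icc hu).1 hxu⟩
  exact odot_comm_of_addCommute (hr.addCommute_apply_zero_of_addCommute hu (.refl u)).symm
    (hr.addCommute_of_mem_Icc hu hc) (hr.addCommute_apply_zero_of_mem_Icc hu hc)

/-- `r(0) ⊙ x = x ⊙ r(0)` for every `x ∈ M`. -/
theorem stmt_15 {G : Type} [Lattice G] [AddGroup G]
    [CovariantClass G G (· + ·) (· ≤ ·)]
    [CovariantClass G G (Function.swap (· + ·)) (· ≤ ·)]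
    (u : G) (hu : IsStrongUnit u) (r : G → G) (hr : IsSquareRoot u r)
    (x : G) (hx0 : 0 ≤ x) (hxu : x ≤ u) :
    odot u (r 0) x = odot u x (r 0) :=
  stmt_15_general u r hr x hx0 hxu
end

section
/- Let M = Γ(G,u) be a semisimple MV-algebra (G abelian) with a square root r. Then r is strict (r(0) = u − r(0)) if and only if the supremum ⋁_{n∈ℕ, n≥1} rⁿ(0) exists in M and equals u. -/
/-- `m` is the infimum of `S` computed inside the interval `M = [0,u]`. -/
def IsInfIn {G : Type} [Lattice G] [AddGroup G] (u : G) (S : Set G) (m : G) : Prop :=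
  (0 ≤ m ∧ m ≤ u) ∧ (∀ s ∈ S, m ≤ s) ∧
  ∀ x : G, 0 ≤ x → x ≤ u → (∀ s ∈ S, x ≤ s) → x ≤ m

/-- `m` is the supremum of `S` computed inside the interval `M = [0,u]`. -/
def IsSupIn {G : Type} [Lattice G] [AddGroup G] (u : G) (S : Set G) (m : G) : Prop :=
  (0 ≤ m ∧ m ≤ u) ∧ (∀ s ∈ S, s ≤ m) ∧
  ∀ x : G, 0 ≤ x → x ≤ u → (∀ s ∈ S, s ≤ x) → m ≤ x

/-- An ideal of the pseudo MV-algebra `M = Γ(G,u) = [0,u]`. -/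
def IsIdeal {G : Type} [Lattice G] [AddGroup G] (u : G) (I : Set G) : Prop :=
  I.Nonempty ∧ I ⊆ Set.Icc 0 u ∧
  (∀ x y : G, y ∈ Set.Icc 0 u → y ≤ x → x ∈ I → y ∈ I) ∧
  (∀ x ∈ I, ∀ y ∈ I, oplus u x y ∈ I)

/-- A maximal ideal of `M = Γ(G,u)`. -/
def IsMaximalIdeal {G : Type} [Lattice G] [AddGroup G] (u : G) (I : Set G) : Prop :=
  IsIdeal u I ∧ I ≠ Set.Icc 0 u ∧
  ∀ J : Set G, IsIdeal u J → I ⊆ J → J = I ∨ J = Set.Icc 0 u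

/-- A normal ideal of `M = Γ(G,u)`: `x ⊕ I = I ⊕ x` for all `x ∈ M`. -/
def IsNormalIdeal {G : Type} [Lattice G] [AddGroup G] (u : G) (I : Set G) : Prop :=
  IsIdeal u I ∧
  ∀ x ∈ Set.Icc (0 : G) u,
    (fun i => oplus u x i) '' I = (fun i => oplus u i x) '' I


/-!
Write `t = r 0`. By (Sq1) and (Sq2), `t` is the largest `y ≥ 0` with `y + y ≤ u`.

If `t + t = u`, then `r x ≥ t` turns (Sq1) into `r x + r x = x + u`, so `u - rⁿ⁺¹(0)` is half
of `u - rⁿ(0)` and `2ⁿ • (u - rⁿ(0)) = u`. For an upper bound `x` of the iterates this gives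
`n • (u - x) ≤ u` for every `n`, and in a semisimple algebra such an element is `0`: it lies in
every maximal ideal `I`, since the ideal generated by `I` and `u - x` cannot contain `u`.

Conversely, `r` maps `[0, t + t]` into itself: for `y = r x` with `x ≤ t + t`, (Sq1) gives
`y + y ≤ u + x ≤ u + t + t`, so `(y - t) ⊔ 0` is one of the `z ≥ 0` with `z + z ≤ u`, whence
`y ≤ t + t`. Hence `t + t` bounds all iterates, and `u ≤ t + t ≤ u` if their supremum is `u`.
-/

section LatticeOrderedGroup

variable {G : Type} [Lattice G] [AddCommGroup G] [CovariantClass G G (· + ·) (· ≤ ·)]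

theorem sup_zero_add_self_le {w a : G} (h2 : w + w ≤ a) (h1 : w ≤ a) (h0 : 0 ≤ a) :
    (w ⊔ 0) + (w ⊔ 0) ≤ a := by
  rw [sup_add, zero_add, add_sup, add_zero]
  exact sup_le (sup_le h2 h1) (sup_le h1 h0)

theorem oplus_le_oplus_add_nsmul {u x y i j c : G} (hc : 0 ≤ c) {m n : ℕ}
    (hx : x ≤ i + m • c) (hy : y ≤ j + n • c) :
    oplus u x y ≤ oplus u i j + (m + n) • c := by
  have hxy : x + y ≤ i + j + (m + n) • c :=
    (add_le_add hx hy).trans_eq (by rw [add_nsmul]; abel)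
  calc oplus u x y ≤ (i + j + (m + n) • c) ⊓ (u + (m + n) • c) :=
        le_inf (inf_le_left.trans hxy)
          (inf_le_right.trans (le_add_of_nonneg_right (nsmul_nonneg hc _)))
    _ = oplus u i j + (m + n) • c := (inf_add _ _ _).symm

theorem odot_self_eq_zero_iff {u y : G} : odot u y y = 0 ↔ y + y ≤ u := by
  rw [odot, sup_eq_right, sub_add_eq_add_sub, sub_nonpos]

theorem odot_self_of_le {u y : G} (h : u ≤ y + y) : odot u y y = y + y - u := by
  rw [odot, sub_add_eq_add_sub, sup_eq_left.2 (sub_nonneg.2 h)]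

end LatticeOrderedGroup

section Semisimple

variable {G : Type} [Lattice G] [AddCommGroup G] {u : G} {I : Set G}

/-- The ideal of `Γ(G,u)` generated by the ideal `I` and the element `c`. -/
def idealJoin (u c : G) (I : Set G) : Set G :=
  {y | y ∈ Set.Icc 0 u ∧ ∃ i ∈ I, ∃ n : ℕ, y ≤ i + n • c}

theorem IsIdeal.zero_mem (hI : IsIdeal u I) : (0 : G) ∈ I := by
  obtain ⟨⟨x, hx⟩, hsub, hdown, -⟩ := hI
  exact hdown x 0 ⟨le_rfl, (hsub hx).1.trans (hsub hx).2⟩ (hsub hx).1 hx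

theorem IsIdeal.zero_le (hI : IsIdeal u I) : (0 : G) ≤ u :=
  (hI.2.1 hI.zero_mem).2

theorem subset_idealJoin (hI : IsIdeal u I) (c : G) : I ⊆ idealJoin u c I :=
  fun i hi => ⟨hI.2.1 hi, i, hi, 0, by simp⟩

theorem mem_idealJoin_self (hI : IsIdeal u I) {c : G} (hc : c ∈ Set.Icc 0 u) :
    c ∈ idealJoin u c I :=
  ⟨hc, 0, hI.zero_mem, 1, by simp⟩

variable [CovariantClass G G (· + ·) (· ≤ ·)]

theorem IsIdeal.idealJoin (hI : IsIdeal u I) {c : G} (hc : 0 ≤ c) :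
    IsIdeal u (idealJoin u c I) := by
  refine ⟨⟨0, subset_idealJoin hI c hI.zero_mem⟩, fun y hy => hy.1, ?_, ?_⟩
  · rintro x y hy hyx ⟨-, i, hi, n, hxi⟩
    exact ⟨hy, i, hi, n, hyx.trans hxi⟩
  · rintro x ⟨hx, i, hi, m, hxi⟩ y ⟨hy, j, hj, n, hyj⟩
    exact ⟨⟨le_inf (add_nonneg hx.1 hy.1) hI.zero_le, inf_le_right⟩,
      oplus u i j, hI.2.2.2 i hi j hj, m + n, oplus_le_oplus_add_nsmul hc hxi hyj⟩

theorem IsMaximalIdeal.mem_of_forall_nsmul_le (hI : IsMaximalIdeal u I) {c : G}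
    (hc : c ∈ Set.Icc 0 u) (hn : ∀ n : ℕ, n • c ≤ u) : c ∈ I := by
  obtain ⟨hI, -, hmax⟩ := hI
  rcases hmax _ (hI.idealJoin hc.1) (subset_idealJoin hI c) with hJ | hJ
  · exact hJ ▸ mem_idealJoin_self hI hc
  · obtain ⟨-, i, hi, n, hu⟩ : u ∈ idealJoin u c I := hJ ▸ ⟨hI.zero_le, le_rfl⟩
    have hci : c ≤ i := by
      have h := (hn (n + 1)).trans hu
      rw [succ_nsmul, add_comm] at h
      exact le_of_add_le_add_right h
    exact hI.2.2.1 i c hc hci hi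

theorem eq_zero_of_forall_nsmul_le
    (hss : ∀ x : G, 0 ≤ x → x ≤ u → (∀ I : Set G, IsMaximalIdeal u I → x ∈ I) → x = 0)
    {c : G} (hc : c ∈ Set.Icc 0 u) (hn : ∀ n : ℕ, n • c ≤ u) : c = 0 :=
  hss c hc.1 hc.2 fun _ hI => hI.mem_of_forall_nsmul_le hc hn

end Semisimple

namespace IsSquareRoot

variable {G : Type} [Lattice G] [AddCommGroup G] {u : G} {r : G → G}

theorem mapsTo (hr : IsSquareRoot u r) : Set.MapsTo r (Set.Icc 0 u) (Set.Icc 0 u) :=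
  fun x hx => hr.1 x hx.1 hx.2

theorem odot_self (hr : IsSquareRoot u r) {x : G} (hx : x ∈ Set.Icc 0 u) :
    odot u (r x) (r x) = x :=
  hr.2.1 x hx.1 hx.2

theorem root_zero_le (hr : IsSquareRoot u r) {x : G} (hx : x ∈ Set.Icc 0 u) : r 0 ≤ r x := by
  have hu : 0 ≤ u := hx.1.trans hx.2
  have h0 := hr.mapsTo ⟨le_rfl, hu⟩
  exact hr.2.2.1 x (r 0) hx.1 hx.2 h0.1 h0.2 ((hr.odot_self ⟨le_rfl, hu⟩).trans_le hx.1)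

variable [CovariantClass G G (· + ·) (· ≤ ·)]

theorem add_self_le (hr : IsSquareRoot u r) {x : G} (hx : x ∈ Set.Icc 0 u) :
    r x + r x ≤ x + u := by
  have h : r x - u + r x ≤ x :=
    (le_sup_left : _ ≤ odot u (r x) (r x)).trans_eq (hr.odot_self hx)
  rwa [sub_add_eq_add_sub, sub_le_iff_le_add] at h

theorem root_zero_add_self_le (hr : IsSquareRoot u r) (hu : 0 ≤ u) : r 0 + r 0 ≤ u :=
  odot_self_eq_zero_iff.1 (hr.odot_self ⟨le_rfl, hu⟩)

theorem le_root_zero (hr : IsSquareRoot u r) {y : G} (hy : 0 ≤ y) (hyy : y + y ≤ u) :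
    y ≤ r 0 := by
  have hyu : y ≤ u := (le_add_of_nonneg_left hy).trans hyy
  exact hr.2.2.1 0 y le_rfl (hy.trans hyu) hy hyu (odot_self_eq_zero_iff.2 hyy).le

theorem add_self_eq_of_strict (hr : IsSquareRoot u r) (ht : r 0 + r 0 = u) {x : G}
    (hx : x ∈ Set.Icc 0 u) : r x + r x = x + u := by
  have hrx := hr.root_zero_le hx
  have h := hr.odot_self hx
  rw [odot_self_of_le (ht ▸ add_le_add hrx hrx)] at h
  exact sub_eq_iff_eq_add.1 h

theorem two_pow_nsmul_sub_iterate (hr : IsSquareRoot u r) (hu : 0 ≤ u) (ht : r 0 + r 0 = u)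
    (n : ℕ) : 2 ^ n • (u - r^[n] 0) = u := by
  induction n with
  | zero => simp
  | succ n ih =>
    have hn := hr.add_self_eq_of_strict ht (hr.mapsTo.iterate n ⟨le_rfl, hu⟩)
    have halve : 2 • (u - r^[n + 1] 0) = u - r^[n] 0 := by
      rw [Function.iterate_succ_apply', two_nsmul]
      calc u - r (r^[n] 0) + (u - r (r^[n] 0))
          = u + u - (r (r^[n] 0) + r (r^[n] 0)) := by abel
        _ = u - r^[n] 0 := by rw [hn]; abel
    rw [pow_succ', mul_nsmul, halve, ih]

theorem mapsTo_Icc_root_zero_add_self (hr : IsSquareRoot u r) (hu : 0 ≤ u) :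
    Set.MapsTo r (Set.Icc 0 (r 0 + r 0)) (Set.Icc 0 (r 0 + r 0)) := by
  intro x hx
  have ht := hr.mapsTo ⟨le_rfl, hu⟩
  have hxu : x ∈ Set.Icc 0 u := ⟨hx.1, hx.2.trans (hr.root_zero_add_self_le hu)⟩
  have hy := hr.mapsTo hxu
  have h2 : r x - r 0 + (r x - r 0) ≤ u := by
    have := (hr.add_self_le hxu).trans (add_le_add_left hx.2 u)
    calc r x - r 0 + (r x - r 0) = r x + r x - (r 0 + r 0) := by abel
      _ ≤ r 0 + r 0 + u - (r 0 + r 0) := sub_le_sub_right this _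
      _ = u := by abel
  have h1 : r x - r 0 ≤ u := (sub_le_self _ ht.1).trans hy.2
  have hle := hr.le_root_zero le_sup_right (sup_zero_add_self_le h2 h1 hu)
  exact ⟨hy.1, sub_le_iff_le_add.1 (le_sup_left.trans hle)⟩

end IsSquareRoot

/-- in a semisimple MV-algebra `M = Γ(G,u)` with square root `r`,
`r` is strict iff `⋁_{n ≥ 1} rⁿ(0)` exists in `M` and equals `u`. -/
theorem stmt_17 {G : Type} [Lattice G] [AddCommGroup G]
    [CovariantClass G G (· + ·) (· ≤ ·)]
    (u : G) (hu : IsStrongUnit u) (r : G → G) (hr : IsSquareRoot u r)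
    (hss : ∀ x : G, 0 ≤ x → x ≤ u →
      (∀ I : Set G, IsMaximalIdeal u I → x ∈ I) → x = 0) :
    r 0 = u - r 0 ↔ IsSupIn u {x : G | ∃ n : ℕ, 1 ≤ n ∧ x = r^[n] 0} u := by
  have hu0 : 0 ≤ u := hu.1
  have hiter : ∀ n, r^[n] 0 ∈ Set.Icc 0 u := fun n => hr.mapsTo.iterate n ⟨le_rfl, hu0⟩
  rw [eq_sub_iff_add_eq]
  constructor
  · intro ht
    refine ⟨⟨hu0, le_rfl⟩, by rintro _ ⟨n, -, rfl⟩; exact (hiter n).2, fun x hx0 hxu hub => ?_⟩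
    have hle : ∀ n, r^[n] 0 ≤ x := by
      rintro (_ | n)
      exacts [hx0, hub _ ⟨n + 1, by omega, rfl⟩]
    have hnc : ∀ n : ℕ, n • (u - x) ≤ u := fun n => calc
      n • (u - x) ≤ 2 ^ n • (u - x) :=
          nsmul_le_nsmul_left (sub_nonneg.2 hxu) Nat.lt_two_pow_self.le
      _ ≤ 2 ^ n • (u - r^[n] 0) := nsmul_le_nsmul_right (sub_le_sub_left (hle n) u) _
      _ = u := hr.two_pow_nsmul_sub_iterate hu0 ht n
    exact (sub_eq_zero.1 (eq_zero_of_forall_nsmul_le hss ⟨sub_nonneg.2 hxu, sub_le_self u hx0⟩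
      hnc)).le
  · intro hsup
    have ht0 : 0 ≤ r 0 + r 0 := add_nonneg (hiter 1).1 (hiter 1).1
    have hbound : ∀ n, r^[n] 0 ≤ r 0 + r 0 := fun n =>
      ((hr.mapsTo_Icc_root_zero_add_self hu0).iterate n ⟨le_rfl, ht0⟩).2
    exact le_antisymm (hr.root_zero_add_self_le hu0)
      (hsup.2.2 _ ht0 (hr.root_zero_add_self_le hu0) fun _ ⟨n, _, hn⟩ => hn ▸ hbound n)
end

section
/- Let H be a subgroup of (ℝ,+) containing 1, let G be an arbitrary lattice-ordered group, and let H ⃗× G be the lexicographic product (componentwise addition on H × G, ordered by (a,b) ≤ (c,d) iff a < c, or a = c and b ≤ d), in which (1,0) is a strong unit; let M = Γ(H ⃗× G,(1,0)) and suppose M has a square root r. Then: (i) H = ℤ if and only if G is the trivial group and r((0,0)) = (0,0); (ii) r is strict if and only if H is two-divisible (for every h ∈ H there is k ∈ H with k + k = h). -/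
section LexPMV

variable (H : AddSubgroup ℝ) (G : Type) [AddGroup G] [Lattice G]

/-- The lexicographic order on `H ⃗× G`. -/
def lle (p q : ↥H × G) : Prop := p.1 < q.1 ∨ (p.1 = q.1 ∧ p.2 ≤ q.2)

open Classical in
/-- The join in the lexicographic product `H ⃗× G`. -/
noncomputable def lsup (p q : ↥H × G) : ↥H × G :=
  if p.1 < q.1 then q else if q.1 < p.1 then p else (p.1, p.2 ⊔ q.2)

open Classical in
/-- The meet in the lexicographic product `H ⃗× G`. -/
noncomputable def linf (p q : ↥H × G) : ↥H × G :=
  if p.1 < q.1 then p else if q.1 < p.1 then q else (p.1, p.2 ⊓ q.2)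

variable (e : ↥H × G)

/-- `p ⊕ q = (p + q) ∧ e` in `Γ(H ⃗× G, e)`. -/
noncomputable def loplus (p q : ↥H × G) : ↥H × G := linf H G (p + q) e

/-- `p ⊙ q = (p - e + q) ∨ 0` in `Γ(H ⃗× G, e)`. -/
noncomputable def lodot (p q : ↥H × G) : ↥H × G := lsup H G (p - e + q) 0

/-- `p⁻ = e - p`. -/
def lnegl (p : ↥H × G) : ↥H × G := e - p

/-- `p~ = -p + e`. -/
def lnegr (p : ↥H × G) : ↥H × G := -p + e

/-- `r` is a square root on the pseudo MV-algebra `M = Γ(H ⃗× G, e)`. -/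
noncomputable def IsLexSquareRoot (r : ↥H × G → ↥H × G) : Prop :=
  (∀ p, lle H G 0 p → lle H G p e → lle H G 0 (r p) ∧ lle H G (r p) e) ∧
  (∀ p, lle H G 0 p → lle H G p e → lodot H G e (r p) (r p) = p) ∧
  (∀ p q, lle H G 0 p → lle H G p e → lle H G 0 q → lle H G q e →
    lle H G (lodot H G e q q) p → lle H G q (r p)) ∧
  (∀ p, lle H G 0 p → lle H G p e →
    r (lnegl H G e p) = loplus H G e (lnegl H G e (r p)) (r 0)) ∧
  (∀ p, lle H G 0 p → lle H G p e →
    r (lnegr H G e p) = loplus H G e (r 0) (lnegr H G e (r p)))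

end LexPMV

lemma lodot_self_cases (H : AddSubgroup ℝ) (G : Type) [AddGroup G] [Lattice G]
    (e : ↥H × G) (he1 : (e.1 : ℝ) = 1) (he2 : e.2 = 0) (q : ↥H × G) :
    ((q.1:ℝ) + q.1 - 1 < 0 ∧ lodot H G e q q = 0) ∨
    ((q.1:ℝ) + q.1 - 1 = 0 ∧ lodot H G e q q = (0, (q.2+q.2) ⊔ 0)) ∨
    (0 < (q.1:ℝ) + q.1 - 1 ∧ lodot H G e q q = (q.1 - e.1 + q.1, q.2+q.2)) := by
  have hw1 : (((q - e + q).1 : ↥H) : ℝ) = (q.1:ℝ) + q.1 - 1 := by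
    have : (q - e + q).1 = q.1 - e.1 + q.1 := rfl
    rw [this]
    push_cast [he1]
    ring
  have hw2 : (q - e + q).2 = q.2 + q.2 := by simp [he2]
  unfold lodot lsup
  rcases lt_trichotomy ((q.1:ℝ) + q.1 - 1) 0 with h|h|h
  · left
    refine ⟨h, ?_⟩
    rw [if_pos]
    show ((q - e + q).1 : ↥H) < (0 : ↥H)
    rw [← Subtype.coe_lt_coe, hw1]
    exact h
  · right; left
    refine ⟨h, ?_⟩
    rw [if_neg, if_neg]
    · refine Prod.ext ?_ ?_
      · show ((q - e + q).1 : ↥H) = 0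
        rw [← Subtype.coe_inj, hw1]
        exact h
      · simp [hw2]
    · show ¬ ((0:↥H×G).1 < (q - e + q).1)
      rw [← Subtype.coe_lt_coe, hw1]
      simp [h]
    · show ¬ ((q - e + q).1 < (0:↥H×G).1)
      rw [← Subtype.coe_lt_coe, hw1]
      simp [h]
  · right; right
    refine ⟨h, ?_⟩
    rw [if_neg, if_pos]
    · exact Prod.ext rfl hw2
    · show ((0:↥H×G).1 < (q - e + q).1)
      rw [← Subtype.coe_lt_coe, hw1]
      exact h
    · show ¬ ((q - e + q).1 < (0:↥H×G).1)
      rw [← Subtype.coe_lt_coe, hw1,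
        show (((0:↥H×G).1:↥H):ℝ) = 0 from rfl]
      linarith


/-- for `M = Γ(H ⃗× G, (1,0))` with a square root `r`:
(i) `H = ℤ` iff `G` is trivial and `r((0,0)) = (0,0)`;
(ii) `r` is strict iff `H` is two-divisible. -/
theorem stmt_19 (H : AddSubgroup ℝ) (h1 : (1 : ℝ) ∈ H)
    (G : Type) [AddGroup G] [Lattice G]
    [CovariantClass G G (· + ·) (· ≤ ·)]
    [CovariantClass G G (Function.swap (· + ·)) (· ≤ ·)]
    (e : ↥H × G) (he : e = ((⟨1, h1⟩ : ↥H), (0 : G)))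
    (r : ↥H × G → ↥H × G) (hr : IsLexSquareRoot H G e r) :
    (((H : Set ℝ) = Set.range ((↑·) : ℤ → ℝ)) ↔ ((∀ g : G, g = 0) ∧ r 0 = 0)) ∧
    ((r 0 = lnegl H G e (r 0)) ↔ (∀ x : ℝ, x ∈ H → ∃ y : ℝ, y ∈ H ∧ y + y = x)) := by
  obtain ⟨hb, hsq1, hsq2, -, -⟩ := hr
  have he1 : ((e.1 : ↥H) : ℝ) = 1 := by rw [he]
  have he2 : e.2 = 0 := by rw [he]
  have h0fst : (((0:↥H×G).1 : ↥H) : ℝ) = 0 := rfl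
  have lle00 : lle H G 0 0 := Or.inr ⟨rfl, le_rfl⟩
  have lle0e : lle H G 0 e := by
    left
    rw [← Subtype.coe_lt_coe, h0fst, he1]
    norm_num
  have hs0 : (0:ℝ) ≤ ((r 0).1 : ℝ) := by
    rcases (hb 0 lle00 lle0e).1 with h|⟨h,-⟩
    · rw [← Subtype.coe_lt_coe, h0fst] at h
      exact le_of_lt h
    · rw [← Subtype.coe_inj, h0fst] at h
      exact le_of_eq h
  -- the key fact coming from (Sq1) at 0
  have hkey0 : ((r 0).1:ℝ) + (r 0).1 - 1 < 0 ∨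
      (((r 0).1:ℝ) + (r 0).1 - 1 = 0 ∧ (r 0).2 + (r 0).2 ≤ 0) := by
    have heq := hsq1 0 lle00 lle0e
    rcases lodot_self_cases H G e he1 he2 (r 0) with ⟨h,h'⟩|⟨h,h'⟩|⟨h,h'⟩
    · exact Or.inl h
    · right
      refine ⟨h, ?_⟩
      have h2 : ((r 0).2 + (r 0).2) ⊔ 0 = (0 : G) := congrArg Prod.snd (h'.symm.trans heq)
      exact sup_eq_right.mp h2
    · exfalso
      have h2 := (Prod.ext_iff.mp (h'.symm.trans heq)).1
      rw [← Subtype.coe_inj] at h2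
      push_cast [he1, h0fst] at h2
      linarith
  -- the key consequence of (Sq2) at 0
  have sq2' : ∀ q : ↥H × G, lle H G 0 q → lle H G q e →
      ((q.1:ℝ) + q.1 < 1 ∨ ((q.1:ℝ) + q.1 = 1 ∧ q.2 + q.2 ≤ 0)) → lle H G q (r 0) := by
    intro q hq0 hqe hc
    apply hsq2 0 q lle00 lle0e hq0 hqe
    rcases lodot_self_cases H G e he1 he2 q with ⟨h,h'⟩|⟨h,h'⟩|⟨h,h'⟩
    · rw [h']
      exact lle00
    · rw [h']
      right
      refine ⟨rfl, ?_⟩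
      show ((q.2+q.2) ⊔ 0 : G) ≤ 0
      rcases hc with hc|⟨-,hc⟩
      · exact ((by linarith : False).elim)
      · exact sup_le hc le_rfl
    · exfalso
      rcases hc with hc|⟨hc,-⟩ <;> linarith
  -- if 1/2 ∈ H then r 0 = (1/2, 0)
  have r0_half : ∀ hh : (1/2:ℝ) ∈ H, r 0 = ((⟨1/2, hh⟩ : ↥H), (0:G)) := by
    intro hh
    have hq := sq2' ((⟨1/2, hh⟩ : ↥H), (0:G)) (by
        left
        rw [← Subtype.coe_lt_coe, h0fst]
        norm_num)
      (by
        left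
        rw [← Subtype.coe_lt_coe, he1]
        norm_num)
      (Or.inr ⟨by norm_num, by simp⟩)
    have hs : ((r 0).1 : ℝ) = 1/2 ∧ (0:G) ≤ (r 0).2 := by
      rcases hq with h|⟨h,h2⟩
      · rw [← Subtype.coe_lt_coe] at h
        norm_num at h
        rcases hkey0 with h3|⟨h3,-⟩ <;> linarith
      · rw [← Subtype.coe_inj] at h
        exact ⟨h.symm, h2⟩
    have ht : (r 0).2 = 0 := by
      rcases hkey0 with h3|⟨-,h3⟩
      · exfalso; linarith [hs.1]
      · have h4 : (r 0).2 ≤ (r 0).2 + (r 0).2 := le_add_of_nonneg_left hs.2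
        exact le_antisymm (le_trans h4 h3) hs.2
    refine Prod.ext ?_ ht
    rw [← Subtype.coe_inj]
    exact hs.1
  constructor
  · -- part (i)
    constructor
    · -- H = ℤ → G trivial ∧ r 0 = 0
      intro hZ
      -- first: (r 0).1 = 0
      have hsH : ((r 0).1 : ℝ) ∈ (H : Set ℝ) := (r 0).1.2
      rw [hZ] at hsH
      obtain ⟨m, hm⟩ := hsH
      have hm : (m:ℝ) = ((r 0).1:ℝ) := hm
      have hs0' : ((r 0).1 : ℝ) = 0 := by
        rcases hkey0 with h|⟨h,-⟩
        · have hm0 : m = 0 := by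
            have h1' : (0:ℝ) ≤ (m:ℝ) := by rw [hm]; exact hs0
            have h2' : (m:ℝ) + m < 1 := by rw [hm]; linarith
            exact_mod_cast by
              have : (0:ℤ) ≤ m := by exact_mod_cast h1'
              have : (m:ℝ) < 1 := by linarith
              have : m < 1 := by exact_mod_cast this
              omega
          rw [← hm, hm0]
          norm_num
        · exfalso
          have hm1 : (m:ℝ) + m = 1 := by rw [hm]; linarith
          have hm2 : ((2*m : ℤ):ℝ) = ((1:ℤ):ℝ) := by push_cast; linarith
          have hm3 : (2*m : ℤ) = 1 := by exact_mod_cast hm2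
          omega
      -- positivity cone is bounded by (r 0).2
      have hcone : ∀ g : G, g ⊔ 0 ≤ (r 0).2 := by
        intro g
        have hq := sq2' ((0:↥H), g ⊔ 0) (Or.inr ⟨rfl, le_sup_right⟩)
          (by
            left
            rw [← Subtype.coe_lt_coe, he1, show (((0:↥H)):ℝ) = 0 from rfl]
            norm_num)
          (Or.inl (by rw [show (((0:↥H)):ℝ) = 0 from rfl]; norm_num))
        rcases hq with h|⟨-,h⟩
        · rw [← Subtype.coe_lt_coe, hs0', show (((0:↥H)):ℝ) = 0 from rfl] at h
          exact absurd h (lt_irrefl 0)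
        · exact h
      have ht0 : (0:G) ≤ (r 0).2 := by simpa using hcone 0
      have ht : (r 0).2 = 0 := by
        have h4 := hcone ((r 0).2 + (r 0).2)
        rw [sup_eq_left.mpr (add_nonneg ht0 ht0)] at h4
        exact le_antisymm (add_le_iff_nonpos_left.mp h4) ht0
      constructor
      · intro g
        have hg : g ≤ 0 := by
          have := hcone g
          rw [ht] at this
          exact le_trans le_sup_left this
        have hg' : -g ≤ 0 := by
          have := hcone (-g)
          rw [ht] at this
          exact le_trans le_sup_left this
        exact le_antisymm hg (neg_nonpos.mp hg')
      · refine Prod.ext ?_ ht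
        rw [← Subtype.coe_inj, hs0', h0fst]
    · -- G trivial ∧ r 0 = 0 → H = ℤ
      rintro ⟨htriv, hr0⟩
      ext x
      simp only [Set.mem_range]
      constructor
      · intro hx
        refine ⟨⌊x⌋, ?_⟩
        show ((⌊x⌋:ℤ):ℝ) = x
        by_contra hne
        have hfrac : Int.fract x ∈ H := sub_mem hx (by
          simpa using AddSubgroup.zsmul_mem H h1 ⌊x⌋)
        have hf0 : 0 < Int.fract x := by
          rcases lt_or_eq_of_le (Int.fract_nonneg x) with h|h
          · exact h
          · exfalso
            apply hne
            have h2 : x - ⌊x⌋ = 0 := by rw [Int.self_sub_floor]; exact h.symm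
            exact (sub_eq_zero.mp h2).symm
        have hf1 : Int.fract x < 1 := Int.fract_lt_one x
        -- pick c ∈ H with 0 < c and c + c ≤ 1
        obtain ⟨c, hcH, hc0, hcc⟩ : ∃ c : ℝ, c ∈ H ∧ 0 < c ∧ c + c ≤ 1 := by
          rcases le_or_gt (Int.fract x) (1/2) with h|h
          · exact ⟨Int.fract x, hfrac, hf0, by linarith⟩
          · exact ⟨1 - Int.fract x, sub_mem h1 hfrac, by linarith, by linarith⟩
        have hq := sq2' ((⟨c, hcH⟩ : ↥H), (0:G)) (by
            left
            rw [← Subtype.coe_lt_coe, h0fst]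
            exact hc0)
          (by
            left
            rw [← Subtype.coe_lt_coe, he1]
            show c < 1
            linarith)
          (by
            rcases lt_or_eq_of_le hcc with h|h
            · exact Or.inl h
            · exact Or.inr ⟨h, by simp⟩)
        rw [hr0] at hq
        rcases hq with h|⟨h,-⟩
        · rw [← Subtype.coe_lt_coe, h0fst] at h
          exact absurd h (by push_cast; linarith)
        · rw [← Subtype.coe_inj, h0fst] at h
          exact absurd h (by push_cast; linarith)
      · rintro ⟨m, hm⟩
        have hm : (m:ℝ) = x := hm
        rw [← hm]
        simpa using AddSubgroup.zsmul_mem H h1 m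
  · -- part (ii)
    constructor
    · -- strict → 2-divisible
      intro hstrict
      have hs12 : ((r 0).1 : ℝ) = 1/2 := by
        have h2 : (r 0).1 = e.1 - (r 0).1 := (Prod.ext_iff.mp hstrict).1
        rw [← Subtype.coe_inj] at h2
        push_cast [he1] at h2
        linarith
      have hh : (1/2:ℝ) ∈ H := hs12 ▸ (r 0).1.2
      -- key: any element of H in (0,1) is 2-divisible
      have key : ∀ z : ℝ, z ∈ H → 0 < z → z < 1 → ∃ y : ℝ, y ∈ H ∧ y + y = z := by
        intro z hz hz0 hz1
        set p : ↥H × G := ((⟨z, hz⟩ : ↥H), (0:G)) with hp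
        have hp0 : lle H G 0 p := by
          left
          rw [← Subtype.coe_lt_coe, h0fst]
          exact hz0
        have hpe : lle H G p e := by
          left
          rw [← Subtype.coe_lt_coe, he1]
          exact hz1
        have heq := hsq1 p hp0 hpe
        have hpz : ((p.1 : ↥H) : ℝ) = z := rfl
        rcases lodot_self_cases H G e he1 he2 (r p) with ⟨h,h'⟩|⟨h,h'⟩|⟨h,h'⟩
        · exfalso
          have h2 := (Prod.ext_iff.mp (h'.symm.trans heq)).1
          rw [← Subtype.coe_inj] at h2
          rw [h0fst, hpz] at h2
          linarith
        · exfalso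
          have h2 : (0 : ↥H) = p.1 := (Prod.ext_iff.mp (h'.symm.trans heq)).1
          rw [← Subtype.coe_inj] at h2
          rw [hpz] at h2
          have h0 : ((0:↥H):ℝ) = 0 := rfl
          rw [h0] at h2
          linarith
        · have h2 : (r p).1 - e.1 + (r p).1 = p.1 := (Prod.ext_iff.mp (h'.symm.trans heq)).1
          rw [← Subtype.coe_inj] at h2
          rw [hpz] at h2
          push_cast [he1] at h2
          refine ⟨((r p).1 : ℝ) - 1/2, sub_mem (r p).1.2 hh, by linarith⟩
      intro x hx
      have hnH : ((⌊x⌋:ℤ):ℝ) ∈ H := by simpa using AddSubgroup.zsmul_mem H h1 ⌊x⌋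
      have hhalfn : ∃ y : ℝ, y ∈ H ∧ y + y = ((⌊x⌋:ℤ):ℝ) := by
        refine ⟨(⌊x⌋ : ℤ) • (1/2 : ℝ), AddSubgroup.zsmul_mem H hh ⌊x⌋, ?_⟩
        rw [zsmul_eq_mul]
        ring
      rcases lt_or_eq_of_le (Int.fract_nonneg x) with hf|hf
      · obtain ⟨y1, hy1, hy1'⟩ := key (Int.fract x) (sub_mem hx hnH) hf (Int.fract_lt_one x)
        obtain ⟨y2, hy2, hy2'⟩ := hhalfn
        refine ⟨y1 + y2, add_mem hy1 hy2, ?_⟩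
        have : Int.fract x = x - ⌊x⌋ := rfl
        rw [this] at hy1'
        linarith
      · obtain ⟨y2, hy2, hy2'⟩ := hhalfn
        refine ⟨y2, hy2, ?_⟩
        have : Int.fract x = x - ⌊x⌋ := rfl
        rw [this] at hf
        linarith
    · -- 2-divisible → strict
      intro hdiv
      obtain ⟨y, hy, hyy⟩ := hdiv 1 h1
      have hy2 : y = 1/2 := by linarith
      have hh : (1/2:ℝ) ∈ H := hy2 ▸ hy
      rw [r0_half hh]
      unfold lnegl
      refine Prod.ext ?_ ?_
      · rw [← Subtype.coe_inj]
        rw [show ((e - ((⟨1/2,hh⟩:↥H),(0:G))).1 : ↥H) = e.1 - ⟨1/2,hh⟩ from rfl]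
        push_cast [he1]
        norm_num
      · rw [show ((e - ((⟨1/2,hh⟩:↥H),(0:G))).2 : G) = e.2 - 0 from rfl, he2]
        simp
end
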